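/- arXiv:1212.0619 — 2 statements merged into one kernel-verified Lean document; each statement's English description precedes it below -/
import Mathlib

section
/- If G is a regular graph, and H₁ and H₂ are A-cospectral graphs with equal adjacency coronals Γ_{A(H₁)}(x) = Γ_{A(H₂)}(x), then G∨̇H₁ and G∨̇H₂ are A-cospectral. -/
open Matrix BigOperators Finset

attribute [local instance] Classical.propDecidable

/-- The coronal of a matrix `M`: `1ᵀ (xI − M)⁻¹ 1`. -/
noncomputable def coronal {n : Type*} [Fintype n] [DecidableEq n]
    (M : Matrix n n ℝ) (x : ℝ) : ℝ :=
  (fun _ => (1 : ℝ)) ⬝ᵥ ((x • (1 : Matrix n n ℝ) - M)⁻¹ *ᵥ fun _ => (1 : ℝ))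

/-- The adjacency matrix over ℝ (classical decidability). -/
noncomputable def adjM {V : Type*} (G : SimpleGraph V) : Matrix V V ℝ :=
  letI := Classical.decRel G.Adj
  G.adjMatrix ℝ

/-- The Laplacian matrix over ℝ. -/
noncomputable def lapM {V : Type*} [Fintype V] (G : SimpleGraph V) : Matrix V V ℝ :=
  letI := Classical.decRel G.Adj
  letI : DecidableEq V := Classical.decEq V
  G.lapMatrix ℝ

/-- The signless Laplacian matrix over ℝ. -/
noncomputable def signlessLapM {V : Type*} [Fintype V] (G : SimpleGraph V) : Matrix V V ℝ :=
  letI := Classical.decRel G.Adj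
  letI : DecidableEq V := Classical.decEq V
  G.degMatrix ℝ + G.adjMatrix ℝ

noncomputable instance edgeSetFintype {V : Type*} [Finite V] (G : SimpleGraph V) :
    Fintype G.edgeSet := Fintype.ofFinite _

/-- Subdivision-vertex join. -/
def svJoin {V₁ V₂ : Type*} (G₁ : SimpleGraph V₁) (G₂ : SimpleGraph V₂) :
    SimpleGraph (V₁ ⊕ (G₁.edgeSet ⊕ V₂)) where
  Adj a b :=
    match a, b with
    | Sum.inl v, Sum.inr (Sum.inl e) => v ∈ (e : Sym2 V₁)
    | Sum.inr (Sum.inl e), Sum.inl v => v ∈ (e : Sym2 V₁)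
    | Sum.inl _, Sum.inr (Sum.inr _) => True
    | Sum.inr (Sum.inr _), Sum.inl _ => True
    | Sum.inr (Sum.inr w), Sum.inr (Sum.inr w') => G₂.Adj w w'
    | _, _ => False
  symm := by
    constructor
    rintro (v | e | w) (v' | e' | w') h <;> simp_all <;> exact h.symm
  loopless := by
    constructor
    rintro (v | e | w) h <;> simp_all

/-- Subdivision-edge join. -/
def seJoin {V₁ V₂ : Type*} (G₁ : SimpleGraph V₁) (G₂ : SimpleGraph V₂) :
    SimpleGraph (V₁ ⊕ (G₁.edgeSet ⊕ V₂)) where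
  Adj a b :=
    match a, b with
    | Sum.inl v, Sum.inr (Sum.inl e) => v ∈ (e : Sym2 V₁)
    | Sum.inr (Sum.inl e), Sum.inl v => v ∈ (e : Sym2 V₁)
    | Sum.inr (Sum.inl _), Sum.inr (Sum.inr _) => True
    | Sum.inr (Sum.inr _), Sum.inr (Sum.inl _) => True
    | Sum.inr (Sum.inr w), Sum.inr (Sum.inr w') => G₂.Adj w w'
    | _, _ => False
  symm := by
    constructor
    rintro (v | e | w) (v' | e' | w') h <;> simp_all <;> exact h.symm
  loopless := by
    constructor
    rintro (v | e | w) h <;> simp_all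

/-- Number of spanning trees of a graph. -/
noncomputable def spanningTreeCount {V : Type*} (G : SimpleGraph V) : ℕ :=
  Nat.card {H : G.Subgraph // H.IsSpanning ∧ H.coe.IsTree}


/-!
Order the vertices of `G ∨̇ H` as `(V(S(G)), V(H))`. Then `A(G ∨̇ H)` is a block matrix with
diagonal blocks `A(S(G))`, `A(H)` and off-diagonal blocks `u 1ᵀ`, `1 uᵀ`, where `u` is the
indicator vector of `V(G)` inside `V(S(G))`. Taking the Schur complement of `xI − A(H)` gives,
whenever `x` is not an eigenvalue of `H`,
`φ(G ∨̇ H, x) = φ(H, x) · det (xI − A(S(G)) − Γ_{A(H)}(x) u uᵀ)`,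
which depends on `H` only through `φ(H)` and `Γ_{A(H)}`. Two polynomials that agree outside the
finitely many roots of `φ(H₁)` are equal.
-/

namespace Matrix

variable {K l m n : Type*}

theorem smul_one_sub_fromBlocks [Ring K] [DecidableEq l] [DecidableEq m]
    (x : K) (A : Matrix l l K) (B : Matrix l m K) (C : Matrix m l K) (D : Matrix m m K) :
    x • 1 - fromBlocks A B C D = fromBlocks (x • 1 - A) (-B) (-C) (x • 1 - D) := by
  rw [← fromBlocks_one, fromBlocks_smul, sub_eq_add_neg, fromBlocks_neg, fromBlocks_add]
  simp only [smul_zero, zero_add, sub_eq_add_neg]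

variable [CommRing K] [Fintype m] [DecidableEq m] [Fintype n] [DecidableEq n]

theorem eval_charpoly_eq_det_smul_one_sub (M : Matrix n n K) (x : K) :
    M.charpoly.eval x = (x • 1 - M).det := by
  rw [eval_charpoly, scalar_apply, smul_one_eq_diagonal]

theorem det_fromBlocks_neg_vecMulVec_one (A : Matrix m m K) (u : m → K) (D : Matrix n n K)
    (hD : IsUnit D.det) :
    (fromBlocks A (-vecMulVec u 1) (-vecMulVec 1 u) D).det =
      D.det * (A - (1 ⬝ᵥ D⁻¹ *ᵥ 1) • vecMulVec u u).det := by
  let := D.invertibleOfIsUnitDet hD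
  rw [det_fromBlocks₂₂, invOf_eq_nonsing_inv, Matrix.neg_mul, Matrix.mul_neg, Matrix.neg_mul,
    neg_neg, vecMulVec_mul, vecMulVec_mul_vecMulVec, vecMulVec_smul, dotProduct_mulVec]

end Matrix

theorem eval_charpoly_fromBlocks_vecMulVec_one {m n : Type*} [Fintype m] [DecidableEq m]
    [Fintype n] [DecidableEq n] (A : Matrix m m ℝ) (u : m → ℝ) (M : Matrix n n ℝ) {x : ℝ}
    (hx : M.charpoly.eval x ≠ 0) :
    (fromBlocks A (vecMulVec u 1) (vecMulVec 1 u) M).charpoly.eval x =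
      M.charpoly.eval x * (x • 1 - A - coronal M x • vecMulVec u u).det := by
  rw [eval_charpoly_eq_det_smul_one_sub] at hx ⊢
  rw [eval_charpoly_eq_det_smul_one_sub, smul_one_sub_fromBlocks, coronal]
  exact det_fromBlocks_neg_vecMulVec_one _ _ _ (isUnit_iff_ne_zero.mpr hx)

namespace SimpleGraph

variable {V W : Type*}

theorem adjM_apply (G : SimpleGraph V) (v w : V) : adjM G v w = if G.Adj v w then 1 else 0 :=
  rfl

def subdivision (G : SimpleGraph V) : SimpleGraph (V ⊕ G.edgeSet) :=
  fromRel fun a b => match a, b with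
    | Sum.inl v, Sum.inr e => v ∈ (e : Sym2 V)
    | _, _ => False

theorem reindex_adjM_svJoin (G : SimpleGraph V) (H : SimpleGraph W) :
    reindex (Equiv.sumAssoc V G.edgeSet W).symm (Equiv.sumAssoc V G.edgeSet W).symm
        (adjM (svJoin G H)) =
      fromBlocks (adjM G.subdivision) (vecMulVec (Sum.elim 1 0) 1) (vecMulVec 1 (Sum.elim 1 0))
        (adjM H) := by
  ext ((v | e) | w) ((v' | e') | w') <;>
    simp [adjM_apply, svJoin, subdivision, vecMulVec]

theorem eval_charpoly_adjM_svJoin [Fintype V] [DecidableEq V] [Fintype W] [DecidableEq W]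
    (G : SimpleGraph V) [Fintype G.edgeSet] [DecidableEq (V ⊕ (G.edgeSet ⊕ W))]
    {H : SimpleGraph W} {x : ℝ} (hx : (adjM H).charpoly.eval x ≠ 0) :
    (adjM (svJoin G H)).charpoly.eval x =
      (adjM H).charpoly.eval x * (x • 1 - adjM G.subdivision -
        coronal (adjM H) x • vecMulVec (Sum.elim 1 0) (Sum.elim 1 0)).det := by
  rw [← charpoly_reindex (Equiv.sumAssoc V G.edgeSet W).symm, reindex_adjM_svJoin,
    eval_charpoly_fromBlocks_vecMulVec_one _ _ _ hx]

end SimpleGraph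

theorem svJoin_A_cospectral_right_general (n n₂ : ℕ) (G : SimpleGraph (Fin n))
    (H₁ H₂ : SimpleGraph (Fin n₂))
    (hcosp : (adjM H₁).charpoly = (adjM H₂).charpoly)
    (hcor : ∀ x : ℝ, coronal (adjM H₁) x = coronal (adjM H₂) x) :
    (adjM (svJoin G H₁)).charpoly = (adjM (svJoin G H₂)).charpoly := by
  refine Polynomial.eq_of_infinite_eval_eq _ _
    ((Polynomial.finite_setOfPred_isRoot (adjM H₁).charpoly_monic.ne_zero).infinite_compl.mono
      fun x hx₁ => ?_)
  have hx₂ : (adjM H₂).charpoly.eval x ≠ 0 := hcosp ▸ hx₁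
  rw [Set.mem_ofPred_eq, G.eval_charpoly_adjM_svJoin hx₁, G.eval_charpoly_adjM_svJoin hx₂, hcosp,
    hcor]

/-- If `G` is regular and `H₁, H₂` are `A`-cospectral with equal adjacency coronals,
then `G ∨̇ H₁` and `G ∨̇ H₂` are `A`-cospectral. -/
theorem svJoin_A_cospectral_right (n n₂ r : ℕ) (G : SimpleGraph (Fin n))
    (hreg : G.IsRegularOfDegree r)
    (H₁ H₂ : SimpleGraph (Fin n₂))
    (hcosp : (adjM H₁).charpoly = (adjM H₂).charpoly)
    (hcor : ∀ x : ℝ, coronal (adjM H₁) x = coronal (adjM H₂) x) :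
    (adjM (svJoin G H₁)).charpoly = (adjM (svJoin G H₂)).charpoly :=
  svJoin_A_cospectral_right_general n n₂ G H₁ H₂ hcosp hcor
end

section
/- Let G₁ be r₁-regular on n₁ vertices and m₁ edges, and G₂ be r₂-regular on n₂ vertices, with signless Laplacian eigenvalues νᵢ. Then φ(Q(G₁∨̇G₂); x) = (x−2)^{m₁−n₁}·(x³ − a x² + b x − 4r₂n₂)·∏_{i=1}^{n₂−1}(x−n₁−νᵢ(G₂))·∏_{i=1}^{n₁−1}(x² − (2+r₁+n₂)x + 2(r₁+n₂) − νᵢ(G₁)), where a = 2+2r₂+r₁+n₁+n₂ and b = 2n₁+2n₂+n₁r₁+2r₁r₂+2r₂n₂+4r₂. -/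
open Matrix BigOperators Finset

attribute [local instance] Classical.propDecidable

/-!
Order the vertices of `G₁ ∨̇ G₂` as `V₁`, then the subdivision vertices, then `V₂`. Then
`xI - Q(G₁ ∨̇ G₂)` is a `3 × 3` block matrix whose lower right part
`diag((x - 2) I, (x - n₁) I - Q(G₂))` can be eliminated by a Schur complement. With `R` the
vertex-edge incidence matrix of `G₁` (so `R Rᵀ = Q(G₁)`) and `J` the all-ones matrix, the complement
is `(x - r₁ - n₂) I - Q(G₁) / (x - 2) - n₂ / (x - n₁ - 2 r₂) • J`, because the all-ones vector is an
eigenvector of `Q(G₂)` for `2 r₂`. It is also an eigenvector of `Q(G₁)` for `2 r₁`, so the rank-one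
term `J` only contributes a scalar factor. This proves the formula for generic `x`; as both sides
are polynomials in `x`, it holds identically, and splitting the roots `2 r₁`, `2 r₂` off the
characteristic polynomials of `Q(G₁)`, `Q(G₂)` gives the stated factorisation.
-/

open Matrix Polynomial

namespace Matrix

variable {l m n K : Type*} [Fintype n] [DecidableEq n]

theorem det_fromBlocks_fromCols_fromBlocks_zero [Fintype l] [Fintype m] [DecidableEq l]
    [DecidableEq m] [CommRing K] (A : Matrix l l K)
    (B₁ : Matrix l m K) (B₂ : Matrix l n K) (C₁ : Matrix m l K) (C₂ : Matrix n l K)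
    {D₁ : Matrix m m K} {D₂ : Matrix n n K} (h₁ : IsUnit D₁.det) (h₂ : IsUnit D₂.det) :
    (fromBlocks A (fromCols B₁ B₂) (fromRows C₁ C₂) (fromBlocks D₁ 0 0 D₂)).det =
      D₁.det * D₂.det * (A - B₁ * D₁⁻¹ * C₁ - B₂ * D₂⁻¹ * C₂).det := by
  let := D₁.invertibleOfIsUnitDet h₁
  let := D₂.invertibleOfIsUnitDet h₂
  let := fromBlocksZero₂₁Invertible D₁ 0 D₂
  rw [det_fromBlocks₂₂, invOf_fromBlocks_zero₂₁_eq, det_fromBlocks_zero₂₁]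
  simp [fromCols_mul_fromBlocks, fromCols_mul_fromRows, invOf_eq_nonsing_inv, sub_sub]

theorem inv_mulVec_one_of_mulVec_one [Field K] {D : Matrix n n K} (hD : IsUnit D.det) {w : K}
    (hDw : D *ᵥ 1 = w • 1) (hw : w ≠ 0) : D⁻¹ *ᵥ 1 = w⁻¹ • 1 := by
  let := D.invertibleOfIsUnitDet hD
  refine inv_mulVec_eq_vec ?_
  rw [mulVec_smul, hDw, smul_smul, inv_mul_cancel₀ hw, one_smul]

theorem vecMulVec_one_mul_inv_mul_vecMulVec_one [Field K] {D : Matrix n n K}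
    (hD : IsUnit D.det) {w : K} (hDw : D *ᵥ 1 = w • 1) (hw : w ≠ 0) :
    vecMulVec (1 : m → K) (1 : n → K) * D⁻¹ * vecMulVec (1 : n → K) (1 : m → K) =
      (Fintype.card n / w) • vecMulVec (1 : m → K) (1 : m → K) := by
  rw [Matrix.mul_assoc, mul_vecMulVec, inv_mulVec_one_of_mulVec_one hD hDw hw,
    vecMulVec_mul_vecMulVec]
  ext i j
  simp [vecMulVec_apply, dotProduct, div_eq_mul_inv, mul_comm]

theorem det_sub_smul_vecMulVec_one_mul [Field K] {A : Matrix n n K} {a : K}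
    (hA : A *ᵥ 1 = a • 1) (ha : a ≠ 0) (c : K) :
    (A - c • vecMulVec 1 1).det * a = A.det * (a - c * Fintype.card n) := by
  have hfactor : A - c • vecMulVec 1 1 = A * (1 + vecMulVec (-(c / a) • 1) 1) := by
    rw [Matrix.mul_add, Matrix.mul_one, mul_vecMulVec, mulVec_smul, hA, smul_smul, neg_mul,
      div_mul_cancel₀ c ha]
    ext i j
    simp [sub_eq_add_neg]
  rw [hfactor, det_mul, vecMulVec_eq (Fin 1), det_one_add_replicateCol_mul_replicateRow]
  simp only [dotProduct, Pi.smul_apply, Pi.one_apply, smul_eq_mul, mul_one, one_mul,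
    Finset.sum_const, Finset.card_univ, nsmul_eq_mul]
  field_simp
  ring

theorem eval_charpoly_eq_det {R : Type*} [CommRing R] (M : Matrix n n R) (t : R) :
    M.charpoly.eval t = (t • 1 - M).det := by
  rw [eval_charpoly, scalar_apply, smul_one_eq_diagonal]

theorem charpoly_eq_X_sub_C_mul_prod_erase {R : Type*} [CommRing R] [IsDomain R] [Infinite R]
    {M : Matrix n n R} {ν : n → R} (hM : ∀ x : R, (x • 1 - M).det = ∏ i, (x - ν i)) (i₀ : n) :
    M.charpoly = (X - C (ν i₀)) * ∏ i ∈ Finset.univ.erase i₀, (X - C (ν i)) := by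
  rw [Finset.mul_prod_erase _ (fun i => X - C (ν i)) (Finset.mem_univ i₀)]
  exact Polynomial.funext fun x => by simp [eval_charpoly_eq_det, hM, eval_prod]

end Matrix

theorem Polynomial.eq_of_eval_eq_of_eval_ne_zero {R : Type*} [CommRing R] [IsDomain R]
    [Infinite R] {p q r : R[X]} (hr : r ≠ 0) (h : ∀ x, r.eval x ≠ 0 → p.eval x = q.eval x) :
    p = q := by
  refine mul_right_cancel₀ hr (Polynomial.funext fun x => ?_)
  by_cases hx : r.eval x = 0
  · simp [hx]
  · simp [h x hx]

namespace SimpleGraph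

section Incidence

variable {V : Type*} (G : SimpleGraph V)

noncomputable def edgeIncMatrix [DecidableEq V] : Matrix V G.edgeSet ℝ :=
  of fun v e => if v ∈ (e : Sym2 V) then 1 else 0

theorem edgeIncMatrix_apply [DecidableEq V] [DecidableRel G.Adj] (v : V) (e : G.edgeSet) :
    G.edgeIncMatrix v e = G.incMatrix ℝ v e := by
  simp [edgeIncMatrix, incMatrix_apply', incidenceSet, e.2]

variable [Fintype V]

theorem degree_eq_sum_adjMatrix [DecidableRel G.Adj] (v : V) :
    (G.degree v : ℝ) = ∑ w, G.adjMatrix ℝ v w := by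
  simpa [mulVec, dotProduct] using (adjMatrix_mulVec_const_apply (α := ℝ) (a := 1) (v := v)).symm

theorem sum_edgeSet_eq_sum {M : Type*} [AddCommMonoid M] (f : Sym2 V → M)
    (hf : ∀ e ∉ G.edgeSet, f e = 0) : ∑ e : G.edgeSet, f e = ∑ e, f e := by
  classical
  rw [← Finset.sum_subtype G.edgeFinset (fun _ => mem_edgeFinset)]
  exact Finset.sum_subset (Finset.subset_univ _) fun e _ he => hf e (by simpa using he)

theorem signlessLapM_mulVec_one_of_isRegular {r : ℕ} (hreg : G.IsRegularOfDegree r) :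
    signlessLapM G *ᵥ 1 = (2 * r : ℝ) • 1 := by
  ext v
  simp [signlessLapM, add_mulVec, degMatrix, hreg.degree_eq, two_mul]

variable [DecidableEq V]

theorem sum_edgeIncMatrix_apply (v : V) : ∑ e, G.edgeIncMatrix v e = G.degree v := by
  classical
  simp_rw [edgeIncMatrix_apply]
  rw [sum_edgeSet_eq_sum G _ fun e he => incMatrix_of_notMem_incidenceSet G fun h => he h.1]
  convert sum_incMatrix_apply G

theorem sum_edgeIncMatrix_apply_left (e : G.edgeSet) : ∑ v, G.edgeIncMatrix v e = 2 := by
  classical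
  simp_rw [edgeIncMatrix_apply]
  exact sum_incMatrix_apply_of_mem_edgeSet G e.2

theorem edgeIncMatrix_mul_transpose : G.edgeIncMatrix * G.edgeIncMatrixᵀ = signlessLapM G := by
  classical
  ext v w
  calc (G.edgeIncMatrix * G.edgeIncMatrixᵀ) v w
      = ∑ e, G.incMatrix ℝ v e * G.incMatrix ℝ w e := by
        simp_rw [mul_apply, transpose_apply, edgeIncMatrix_apply]
        exact sum_edgeSet_eq_sum G (fun e => G.incMatrix ℝ v e * G.incMatrix ℝ w e) fun e he => by
          rw [incMatrix_of_notMem_incidenceSet G fun h => he h.1, zero_mul]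
    _ = (G.incMatrix ℝ * (G.incMatrix ℝ)ᵀ) v w := rfl
    _ = signlessLapM G v w := by
        rw [incMatrix_mul_transpose]
        simp only [signlessLapM, degMatrix, Matrix.add_apply, diagonal_apply, adjMatrix_apply,
          of_apply]
        split_ifs <;> simp_all

end Incidence

section svJoin

variable {V₁ V₂ : Type*} (G₁ : SimpleGraph V₁) (G₂ : SimpleGraph V₂)

section Adj

variable {v v' : V₁} {e e' : G₁.edgeSet} {w w' : V₂}

@[simp] theorem svJoin_adj_inl_inl : ¬ (svJoin G₁ G₂).Adj (.inl v) (.inl v') := id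

@[simp] theorem svJoin_adj_inl_inr_inl :
    (svJoin G₁ G₂).Adj (.inl v) (.inr (.inl e)) ↔ v ∈ (e : Sym2 V₁) := .rfl

@[simp] theorem svJoin_adj_inr_inl_inl :
    (svJoin G₁ G₂).Adj (.inr (.inl e)) (.inl v) ↔ v ∈ (e : Sym2 V₁) := .rfl

@[simp] theorem svJoin_adj_inl_inr_inr : (svJoin G₁ G₂).Adj (.inl v) (.inr (.inr w)) := trivial

@[simp] theorem svJoin_adj_inr_inr_inl : (svJoin G₁ G₂).Adj (.inr (.inr w)) (.inl v) := trivial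

@[simp] theorem svJoin_adj_inr_inl_inr_inl :
    ¬ (svJoin G₁ G₂).Adj (.inr (.inl e)) (.inr (.inl e')) := id

@[simp] theorem svJoin_adj_inr_inl_inr_inr :
    ¬ (svJoin G₁ G₂).Adj (.inr (.inl e)) (.inr (.inr w)) := id

@[simp] theorem svJoin_adj_inr_inr_inr_inl :
    ¬ (svJoin G₁ G₂).Adj (.inr (.inr w)) (.inr (.inl e)) := id

@[simp] theorem svJoin_adj_inr_inr_inr_inr :
    (svJoin G₁ G₂).Adj (.inr (.inr w)) (.inr (.inr w')) ↔ G₂.Adj w w' := .rfl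

end Adj

variable [Fintype V₁] [Fintype V₂]

theorem svJoin_degree_inl (v : V₁) :
    (svJoin G₁ G₂).degree (.inl v) = G₁.degree v + Fintype.card V₂ := by
  classical
  have hsum := degree_eq_sum_adjMatrix (svJoin G₁ G₂) (.inl v)
  simp only [adjMatrix_apply, Fintype.sum_sum_type, svJoin_adj_inl_inl, ↓reduceIte,
    Finset.sum_const_zero, svJoin_adj_inl_inr_inl, svJoin_adj_inl_inr_inr, Finset.sum_const,
    Finset.card_univ, nsmul_eq_mul, mul_one, zero_add] at hsum
  have hinc := sum_edgeIncMatrix_apply G₁ v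
  simp only [edgeIncMatrix, of_apply] at hinc
  rw [hinc] at hsum
  exact_mod_cast hsum

theorem svJoin_degree_inr_inl (e : G₁.edgeSet) : (svJoin G₁ G₂).degree (.inr (.inl e)) = 2 := by
  classical
  have hsum := degree_eq_sum_adjMatrix (svJoin G₁ G₂) (.inr (.inl e))
  simp only [adjMatrix_apply, Fintype.sum_sum_type, svJoin_adj_inr_inl_inl,
    svJoin_adj_inr_inl_inr_inl, ↓reduceIte, Finset.sum_const_zero, svJoin_adj_inr_inl_inr_inr,
    add_zero] at hsum
  have hinc := sum_edgeIncMatrix_apply_left G₁ e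
  simp only [edgeIncMatrix, of_apply] at hinc
  rw [hinc] at hsum
  exact_mod_cast hsum

theorem svJoin_degree_inr_inr (w : V₂) :
    (svJoin G₁ G₂).degree (.inr (.inr w)) = Fintype.card V₁ + G₂.degree w := by
  classical
  have hsum := degree_eq_sum_adjMatrix (svJoin G₁ G₂) (.inr (.inr w))
  simp only [adjMatrix_apply, Fintype.sum_sum_type, svJoin_adj_inr_inr_inl, ↓reduceIte,
    Finset.sum_const, Finset.card_univ, nsmul_eq_mul, mul_one, svJoin_adj_inr_inr_inr_inl,
    svJoin_adj_inr_inr_inr_inr, mul_zero, zero_add] at hsum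
  have hdeg := degree_eq_sum_adjMatrix G₂ w
  simp only [adjMatrix_apply] at hdeg
  rw [← hdeg] at hsum
  exact_mod_cast hsum

variable [DecidableEq V₁] [DecidableEq V₂]

theorem smul_one_sub_signlessLapM_svJoin (x : ℝ) :
    x • (1 : Matrix (V₁ ⊕ (G₁.edgeSet ⊕ V₂)) _ ℝ) - signlessLapM (svJoin G₁ G₂) =
      fromBlocks (diagonal fun v => x - G₁.degree v - Fintype.card V₂)
        (fromCols (-G₁.edgeIncMatrix) (-vecMulVec 1 1))
        (fromRows (-G₁.edgeIncMatrixᵀ) (-vecMulVec 1 1))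
        (fromBlocks ((x - 2) • 1) 0 0 ((x - Fintype.card V₁) • 1 - signlessLapM G₂)) := by
  ext (v | e | w) (v' | e' | w') <;>
    simp only [signlessLapM, degMatrix, Matrix.sub_apply, Matrix.smul_apply, Matrix.add_apply,
      Matrix.neg_apply, Matrix.zero_apply, one_apply, diagonal_apply, adjMatrix_apply, smul_eq_mul,
      Sum.inl.injEq, Sum.inr.injEq, reduceCtorEq, ↓reduceIte, mul_ite, mul_one, mul_zero, add_zero,
      zero_add, zero_sub, sub_self, Nat.cast_add, Nat.cast_ofNat, svJoin_degree_inl,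
      svJoin_degree_inr_inl, svJoin_degree_inr_inr, svJoin_adj_inl_inl, svJoin_adj_inl_inr_inl,
      svJoin_adj_inr_inl_inl, svJoin_adj_inl_inr_inr, svJoin_adj_inr_inr_inl,
      svJoin_adj_inr_inl_inr_inl, svJoin_adj_inr_inl_inr_inr, svJoin_adj_inr_inr_inr_inl,
      svJoin_adj_inr_inr_inr_inr, edgeIncMatrix, vecMulVec, neg_of, of_apply, Pi.one_apply,
      Pi.neg_apply, transpose_apply, fromBlocks_apply₁₁, fromBlocks_apply₁₂, fromBlocks_apply₂₁,
      fromBlocks_apply₂₂, fromCols_apply_inl, fromCols_apply_inr, fromRows_apply_inl,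
      fromRows_apply_inr] <;>
    split_ifs <;> ring

variable {G₁ G₂} {r₁ r₂ : ℕ}

theorem det_smul_one_sub_signlessLapM_svJoin_eq (hreg₁ : G₁.IsRegularOfDegree r₁)
    (hreg₂ : G₂.IsRegularOfDegree r₂) {x : ℝ} (hx : x ≠ 2)
    (hw : x - Fintype.card V₁ - 2 * r₂ ≠ 0)
    (hD : ((x - Fintype.card V₁) • 1 - signlessLapM G₂).det ≠ 0) :
    (x • 1 - signlessLapM (svJoin G₁ G₂)).det =
      (x - 2) ^ Fintype.card G₁.edgeSet * ((x - Fintype.card V₁) • 1 - signlessLapM G₂).det *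
        ((x - r₁ - Fintype.card V₂) • 1 - (x - 2)⁻¹ • signlessLapM G₁
          - (Fintype.card V₂ / (x - Fintype.card V₁ - 2 * r₂)) • vecMulVec 1 1).det := by
  set D₂ := (x - Fintype.card V₁) • (1 : Matrix V₂ V₂ ℝ) - signlessLapM G₂ with hD₂
  have hx' : x - 2 ≠ 0 := sub_ne_zero.2 hx
  have hD₂one : D₂ *ᵥ 1 = (x - Fintype.card V₁ - 2 * r₂) • 1 := by
    rw [hD₂, sub_mulVec, smul_mulVec, one_mulVec, signlessLapM_mulVec_one_of_isRegular G₂ hreg₂,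
      ← sub_smul]
  have hRR : -G₁.edgeIncMatrix * ((x - 2) • (1 : Matrix G₁.edgeSet G₁.edgeSet ℝ))⁻¹ *
      -G₁.edgeIncMatrixᵀ = (x - 2)⁻¹ • signlessLapM G₁ := by
    rw [inv_eq_left_inv (B := (x - 2)⁻¹ • 1) (by simp [smul_smul, hx']), Matrix.neg_mul,
      Matrix.neg_mul, Matrix.mul_neg, neg_neg, Matrix.mul_smul, Matrix.mul_one, Matrix.smul_mul,
      edgeIncMatrix_mul_transpose]
  have hJJ : -vecMulVec (1 : V₁ → ℝ) (1 : V₂ → ℝ) * D₂⁻¹ * -vecMulVec (1 : V₂ → ℝ) (1 : V₁ → ℝ)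
      = (Fintype.card V₂ / (x - Fintype.card V₁ - 2 * r₂)) • vecMulVec 1 1 := by
    rw [Matrix.neg_mul, Matrix.neg_mul, Matrix.mul_neg, neg_neg,
      vecMulVec_one_mul_inv_mul_vecMulVec_one hD.isUnit hD₂one hw]
  have hdiag : (diagonal fun v => x - G₁.degree v - Fintype.card V₂) =
      (x - r₁ - Fintype.card V₂) • (1 : Matrix V₁ V₁ ℝ) := by
    simp [hreg₁.degree_eq, smul_one_eq_diagonal]
  rw [smul_one_sub_signlessLapM_svJoin, hdiag,
    det_fromBlocks_fromCols_fromBlocks_zero _ _ _ _ _ (by simp [hx']) hD.isUnit, hRR, hJJ,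
    det_smul, det_one, mul_one]

theorem det_smul_one_sub_signlessLapM_svJoin_of_ne (hreg₁ : G₁.IsRegularOfDegree r₁)
    (hreg₂ : G₂.IsRegularOfDegree r₂) {x : ℝ} (hx : x ≠ 2)
    (hw : x - Fintype.card V₁ - 2 * r₂ ≠ 0)
    (ht : (x - 2) * (x - r₁ - Fintype.card V₂) - 2 * r₁ ≠ 0)
    (hD : ((x - Fintype.card V₁) • 1 - signlessLapM G₂).det ≠ 0) :
    (x • 1 - signlessLapM (svJoin G₁ G₂)).det * (x - 2) ^ Fintype.card V₁ *
        ((x - Fintype.card V₁ - 2 * r₂) * ((x - 2) * (x - r₁ - Fintype.card V₂) - 2 * r₁)) =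
      (x - 2) ^ Fintype.card G₁.edgeSet *
        ((x - Fintype.card V₁ - 2 * r₂) * ((x - 2) * (x - r₁ - Fintype.card V₂) - 2 * r₁)
          - Fintype.card V₁ * Fintype.card V₂ * (x - 2)) *
        ((x - Fintype.card V₁) • 1 - signlessLapM G₂).det *
        (((x - 2) * (x - r₁ - Fintype.card V₂)) • 1 - signlessLapM G₁).det := by
  rw [det_smul_one_sub_signlessLapM_svJoin_eq hreg₁ hreg₂ hx hw hD]
  set n₁ : ℝ := ((Fintype.card V₁ : ℕ) : ℝ)
  set n₂ : ℝ := ((Fintype.card V₂ : ℕ) : ℝ)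
  set w := x - n₁ - 2 * r₂
  set y := (x - 2) * (x - r₁ - n₂) with hy
  set T := (x - r₁ - n₂) • (1 : Matrix V₁ V₁ ℝ) - (x - 2)⁻¹ • signlessLapM G₁ with hT
  have hx' : x - 2 ≠ 0 := sub_ne_zero.2 hx
  have hTone : T *ᵥ 1 = ((y - 2 * r₁) / (x - 2)) • 1 := by
    rw [hT, sub_mulVec, smul_mulVec, smul_mulVec, one_mulVec,
      signlessLapM_mulVec_one_of_isRegular G₁ hreg₁, smul_smul, ← sub_smul, hy]
    congr 1
    field_simp
  have hTdet : T.det * (x - 2) ^ Fintype.card V₁ = (y • 1 - signlessLapM G₁).det := by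
    rw [mul_comm, ← det_smul, hT, smul_sub, smul_smul, smul_smul, mul_inv_cancel₀ hx', one_smul]
  have hrankOne : (T - (n₂ / w) • vecMulVec 1 1).det * (w * (y - 2 * r₁)) =
      T.det * (w * (y - 2 * r₁) - n₁ * n₂ * (x - 2)) := by
    have := det_sub_smul_vecMulVec_one_mul hTone (div_ne_zero ht hx') (n₂ / w)
    field_simp at this
    linear_combination this
  set D₂ := (x - n₁) • (1 : Matrix V₂ V₂ ℝ) - signlessLapM G₂
  linear_combination
    ((x - 2) ^ Fintype.card G₁.edgeSet * D₂.det * (x - 2) ^ Fintype.card V₁) * hrankOne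
      + ((x - 2) ^ Fintype.card G₁.edgeSet * D₂.det * (w * (y - 2 * r₁) - n₁ * n₂ * (x - 2)))
        * hTdet

theorem charpoly_signlessLapM_svJoin_of_isRegular (hreg₁ : G₁.IsRegularOfDegree r₁)
    (hreg₂ : G₂.IsRegularOfDegree r₂) {P₁ P₂ : ℝ[X]}
    (hP₁ : (signlessLapM G₁).charpoly = (X - C (2 * r₁ : ℝ)) * P₁)
    (hP₂ : (signlessLapM G₂).charpoly = (X - C (2 * r₂ : ℝ)) * P₂) :
    (signlessLapM (svJoin G₁ G₂)).charpoly * (X - C 2) ^ Fintype.card V₁ =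
      (X - C 2) ^ Fintype.card G₁.edgeSet *
        ((X - C (Fintype.card V₁ : ℝ) - C (2 * r₂ : ℝ)) *
            ((X - C 2) * (X - C (r₁ : ℝ) - C (Fintype.card V₂ : ℝ)) - C (2 * r₁ : ℝ))
          - C (Fintype.card V₁ * Fintype.card V₂ : ℝ) * (X - C 2)) *
        P₂.comp (X - C (Fintype.card V₁ : ℝ)) *
        P₁.comp ((X - C 2) * (X - C (r₁ : ℝ) - C (Fintype.card V₂ : ℝ))) := by
  set Y : ℝ[X] := (X - C 2) * (X - C (r₁ : ℝ) - C (Fintype.card V₂ : ℝ))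
  -- Off the roots of this polynomial, `det_smul_one_sub_signlessLapM_svJoin_of_ne` applies.
  have hgeneric : ((X - C 2) * (X - C (Fintype.card V₁ : ℝ) - C (2 * r₂ : ℝ)) *
      (Y - C (2 * r₁ : ℝ)) *
        (signlessLapM G₂).charpoly.comp (X - C (Fintype.card V₁ : ℝ))).Monic := by
    have hY : (Y - C (2 * r₁ : ℝ)).Monic := by
      simp only [Y]
      monicity!
    exact (((monic_X_sub_C _).mul (by monicity!)).mul hY).mul
      ((charpoly_monic _).comp (monic_X_sub_C _) (by rw [natDegree_X_sub_C]; exact one_ne_zero))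
  refine eq_of_eval_eq_of_eval_ne_zero hgeneric.ne_zero fun z hz => ?_
  simp only [eval_mul, eval_sub, eval_X, eval_C, eval_comp, eval_pow, mul_ne_zero_iff, Y]
    at hz ⊢
  obtain ⟨⟨⟨hz2, hw⟩, ht⟩, hD⟩ := hz
  have key := det_smul_one_sub_signlessLapM_svJoin_of_ne hreg₁ hreg₂ (sub_ne_zero.1 hz2) hw ht
    (by rwa [eval_charpoly_eq_det] at hD)
  simp only [← eval_charpoly_eq_det, hP₁, hP₂, eval_mul, eval_sub, eval_X, eval_C] at key
  refine mul_right_cancel₀ (mul_ne_zero hw ht) ?_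
  linear_combination key

end svJoin

end SimpleGraph

/-- The signless Laplacian characteristic polynomial of `G₁ ∨̇ G₂` for regular graphs
`G₁` (degree `r₁`) and `G₂` (degree `r₂`), where `a = 2+2r₂+r₁+n₁+n₂` and
`b = 2n₁+2n₂+n₁r₁+2r₁r₂+2r₂n₂+4r₂`. -/
theorem signlessLap_charpoly_svJoin_regular (n₁ m₁ n₂ r₁ r₂ : ℕ)
    (hn₁ : 0 < n₁) (hn₂ : 0 < n₂)
    (G₁ : SimpleGraph (Fin n₁)) (hreg₁ : G₁.IsRegularOfDegree r₁)
    (hm₁ : G₁.edgeFinset.card = m₁)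
    (G₂ : SimpleGraph (Fin n₂)) (hreg₂ : G₂.IsRegularOfDegree r₂)
    (nu₁ : Fin n₁ → ℝ)
    (hnu₁top : nu₁ ⟨n₁ - 1, by omega⟩ = 2 * r₁)
    (hchar₁ : ∀ x : ℝ,
      (x • (1 : Matrix (Fin n₁) (Fin n₁) ℝ) - signlessLapM G₁).det = ∏ i, (x - nu₁ i))
    (nu₂ : Fin n₂ → ℝ)
    (hnu₂top : nu₂ ⟨n₂ - 1, by omega⟩ = 2 * r₂)
    (hchar₂ : ∀ x : ℝ,
      (x • (1 : Matrix (Fin n₂) (Fin n₂) ℝ) - signlessLapM G₂).det = ∏ i, (x - nu₂ i))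
    (x : ℝ) (hx2 : x ≠ 2) :
    (x • (1 : Matrix (Fin n₁ ⊕ (G₁.edgeSet ⊕ Fin n₂)) (Fin n₁ ⊕ (G₁.edgeSet ⊕ Fin n₂)) ℝ)
        - signlessLapM (svJoin G₁ G₂)).det
      = (x - 2) ^ ((m₁ : ℤ) - (n₁ : ℤ))
        * (x ^ 3 - ((2 : ℝ) + 2 * r₂ + r₁ + n₁ + n₂) * x ^ 2
            + ((2 : ℝ) * n₁ + 2 * n₂ + n₁ * r₁ + 2 * r₁ * r₂ + 2 * r₂ * n₂ + 4 * r₂) * x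
            - 4 * r₂ * n₂)
        * (∏ i ∈ Finset.univ.erase ⟨n₂ - 1, by omega⟩, (x - n₁ - nu₂ i))
        * (∏ i ∈ Finset.univ.erase ⟨n₁ - 1, by omega⟩,
            (x ^ 2 - (2 + r₁ + n₂) * x + 2 * (r₁ + n₂) - nu₁ i)) := by
  have hP₁ := charpoly_eq_X_sub_C_mul_prod_erase hchar₁ ⟨n₁ - 1, by omega⟩
  have hP₂ := charpoly_eq_X_sub_C_mul_prod_erase hchar₂ ⟨n₂ - 1, by omega⟩
  rw [hnu₁top] at hP₁
  rw [hnu₂top] at hP₂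
  have key := congrArg (eval x)
    (SimpleGraph.charpoly_signlessLapM_svJoin_of_isRegular hreg₁ hreg₂ hP₁ hP₂)
  simp only [eval_mul, eval_pow, eval_sub, eval_X, eval_C, eval_comp, eval_prod,
    eval_charpoly_eq_det, Fintype.card_fin, ← SimpleGraph.edgeFinset_card, hm₁] at key
  rw [zpow_sub₀ (sub_ne_zero.2 hx2), zpow_natCast, zpow_natCast, div_mul_eq_mul_div,
    div_mul_eq_mul_div, div_mul_eq_mul_div, eq_div_iff (pow_ne_zero _ (sub_ne_zero.2 hx2))]
  rw [key, Finset.prod_congr rfl fun i _ => show (x - 2) * (x - r₁ - n₂) - nu₁ i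
    = x ^ 2 - (2 + r₁ + n₂) * x + 2 * (r₁ + n₂) - nu₁ i by ring]
  ring
end
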